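/- Define M over 𝔽₂ indexed by nonzero vectors of 𝔽₂^{2m} by M_{uv} = 1 + σ(u,v). Then M fits the complement condition for the symplectic graph Sp(2m,𝔽₂) (i.e., M_{uu} = 1 and M_{uv} = 0 whenever u ≠ v are non-adjacent in Sp(2m,𝔽₂)) and has rank at most 2m + 1. -/

import Mathlib

open Finset

/-- The canonical symplectic form `σ(u,v) = uᵀ [[0, Iₘ], [-Iₘ, 0]] v` on `𝔽₂^{2m}`,
with vectors written as pairs in `(𝔽₂^m) × (𝔽₂^m)`. -/
def sympForm (m : ℕ) (u v : (Fin m → ZMod 2) × (Fin m → ZMod 2)) : ZMod 2 :=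
  (∑ i, u.1 i * v.2 i) - ∑ i, u.2 i * v.1 i

/-- The symplectic graph `Sp(2m, 𝔽₂)`: vertices are the nonzero vectors of `𝔽₂^{2m}`,
with distinct vertices adjacent iff the symplectic form vanishes on them. -/
def sympGraph (m : ℕ) :
    SimpleGraph {v : (Fin m → ZMod 2) × (Fin m → ZMod 2) // v ≠ 0} where
  Adj u v := u ≠ v ∧ sympForm m u.1 v.1 = 0
  symm := by
    constructor
    rintro u v ⟨h, hs⟩
    refine ⟨h.symm, ?_⟩
    have h1 : ∀ f g : Fin m → ZMod 2, ∑ i, f i * g i = ∑ i, g i * f i :=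
      fun f g => Finset.sum_congr rfl fun i _ => mul_comm _ _
    unfold sympForm at hs ⊢
    rw [h1 v.1.1 u.1.2, h1 v.1.2 u.1.1]
    linear_combination -hs
  loopless := ⟨fun u h => h.1 rfl⟩

/-! Since `σ` is alternating, `M` has ones on the diagonal, and over `𝔽₂` a nonzero `σ(u,v)`
is `1`, so `M` vanishes on non-adjacent pairs. For the rank, `1 + σ(u,v)` is the dot product
`(1, u₁, -u₂) ⬝ᵥ (1, v₂, v₁)`, so `M` factors through `𝔽₂^{2m+1}`. -/

theorem Matrix.rank_of_dotProduct_le {ι ι' κ R : Type*} [Fintype ι'] [Fintype κ]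
    [CommSemiring R] [StrongRankCondition R] (f : ι → κ → R) (g : ι' → κ → R) :
    (Matrix.of fun i j => f i ⬝ᵥ g j).rank ≤ Fintype.card κ :=
  calc (Matrix.of fun i j => f i ⬝ᵥ g j).rank = (Matrix.of f * (Matrix.of g).transpose).rank := rfl
    _ ≤ (Matrix.of f).rank := Matrix.rank_mul_le_left _ _
    _ ≤ Fintype.card κ := Matrix.rank_le_card_width _

theorem sympForm_self (m : ℕ) (u : (Fin m → ZMod 2) × (Fin m → ZMod 2)) :
    sympForm m u u = 0 := by
  simp only [sympForm, mul_comm (u.1 _), sub_self]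

theorem one_add_sympForm_eq_dotProduct (m : ℕ) (u v : (Fin m → ZMod 2) × (Fin m → ZMod 2)) :
    1 + sympForm m u v =
      Sum.elim (1 : Fin 1 → ZMod 2) (Sum.elim u.1 (-u.2)) ⬝ᵥ Sum.elim 1 (Sum.elim v.2 v.1) := by
  change 1 + (u.1 ⬝ᵥ v.2 - u.2 ⬝ᵥ v.1) = _
  rw [sumElim_dotProduct_sumElim, sumElim_dotProduct_sumElim, neg_dotProduct, sub_eq_add_neg]
  simp [dotProduct]

/-- The matrix `M u v = 1 + σ(u,v)` over `𝔽₂`, indexed by the nonzero vectors of `𝔽₂^{2m}`,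
has all diagonal entries `1`, vanishes on distinct non-adjacent pairs of `Sp(2m,𝔽₂)`,
and has rank at most `2m + 1`. -/
theorem sympGraph_fitting_matrix (m : ℕ) :
    let M : Matrix {v : (Fin m → ZMod 2) × (Fin m → ZMod 2) // v ≠ 0}
        {v : (Fin m → ZMod 2) × (Fin m → ZMod 2) // v ≠ 0} (ZMod 2) :=
      fun u v => 1 + sympForm m u.1 v.1
    (∀ u, M u u = 1) ∧
    (∀ u v, u ≠ v → ¬ (sympGraph m).Adj u v → M u v = 0) ∧
    M.rank ≤ 2 * m + 1 := by
  intro M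
  have one_add_of_ne_zero : ∀ x : ZMod 2, x ≠ 0 → 1 + x = 0 := by decide
  refine ⟨fun u => by simp [M, sympForm_self], fun u v huv hnadj => ?_, ?_⟩
  · exact one_add_of_ne_zero _ fun h => hnadj ⟨huv, h⟩
  · have hM : M = Matrix.of fun u v =>
        Sum.elim (1 : Fin 1 → ZMod 2) (Sum.elim u.1.1 (-u.1.2)) ⬝ᵥ
          Sum.elim 1 (Sum.elim v.1.2 v.1.1) := by
      ext u v
      exact one_add_sympForm_eq_dotProduct m u.1 v.1
    rw [hM]
    refine (Matrix.rank_of_dotProduct_le _ _).trans_eq ?_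
    simp only [Fintype.card_sum, Fintype.card_fin]
    ring
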